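/- arXiv:0803.2423 — 2 statements merged into one kernel-verified Lean document; each statement's English description precedes it below -/
import Mathlib

section
/- A commutative table algebra (A,B) comes from an association scheme — i.e., there exists an injective unital ℂ-algebra homomorphism D : A → Mat_X(ℂ) such that each D(b), b ∈ B, is a (0,1)-matrix, D(b*) = D(b)ᵀ, distinct D(b), D(c) never have an entry 1 in the same position, and Σ_{b∈B} D(b) = J — if and only if (A,B) satisfies the standard character condition and some representation D affording ζ satisfies D(b*) = D(b)ᵀ and D(b) is a (0,1)-matrix for every b ∈ B. -/
open Matrix
open scoped BigOperators

/-- `(A, B)` is a (possibly noncommutative) C-algebra with degree map `deg` and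
structure constants `lam` :
(I) `1 ∈ B`, `B` is a basis, and the structure constants are real;
(II) `star` is a conjugate-linear involutory anti-automorphism with `B* = B`
(encoded by the `StarRing`/`StarModule` instances and `star_mem`);
(III) `λ_{a b 1} = δ_{a, b*} |a|` with `|a| > 0`;
(IV) `deg` is a `ℂ`-algebra homomorphism with `deg b = |b|` and `deg (x*) = conj (deg x)`. -/
structure IsCAlgebra (A : Type*) [Ring A] [Algebra ℂ A] [StarRing A] [StarModule ℂ A]
    (B : Finset A) (deg : A →ₐ[ℂ] ℂ) (lam : A → A → A → ℝ) : Prop where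
  indep : LinearIndependent ℂ (fun x : ↥(B : Set A) => (x : A))
  span_top : Submodule.span ℂ (B : Set A) = ⊤
  one_mem : (1 : A) ∈ B
  star_mem : ∀ b ∈ B, star b ∈ B
  struct : ∀ a ∈ B, ∀ b ∈ B, a * b = ∑ c ∈ B, (lam a b c : ℂ) • c
  lam_one_eq : ∀ a ∈ B, (lam a (star a) 1 : ℂ) = deg a
  lam_one_ne : ∀ a ∈ B, ∀ b ∈ B, a ≠ star b → lam a b 1 = 0
  deg_pos : ∀ a ∈ B, 0 < lam a (star a) 1
  deg_star : ∀ x : A, deg (star x) = (starRingEnd ℂ) (deg x)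

/-- A table algebra is a C-algebra with nonnegative structure constants. -/
structure IsTableAlgebra (A : Type*) [Ring A] [Algebra ℂ A] [StarRing A] [StarModule ℂ A]
    (B : Finset A) (deg : A →ₐ[ℂ] ℂ) (lam : A → A → A → ℝ)
    extends IsCAlgebra A B deg lam : Prop where
  lam_nonneg : ∀ a ∈ B, ∀ b ∈ B, ∀ c ∈ B, 0 ≤ lam a b c

/-- The standard feasible trace: `ζ(1) = |B⁺|` and `ζ(b) = 0` for `1 ≠ b ∈ B`. -/
def IsStdTrace {A : Type*} [Ring A] [Algebra ℂ A] (B : Finset A) (deg : A →ₐ[ℂ] ℂ)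
    (ζ : A →ₗ[ℂ] ℂ) : Prop :=
  ζ 1 = (∑ b ∈ B, deg b) ∧ ∀ b ∈ B, b ≠ 1 → ζ b = 0

/-- `χ` is an irreducible character of `A`: the trace of a surjective (hence irreducible)
matrix representation of positive degree. -/
def IsIrrChar (A : Type*) [Ring A] [Algebra ℂ A] (χ : A → ℂ) : Prop :=
  ∃ (n : ℕ) (D : A →ₐ[ℂ] Matrix (Fin n) (Fin n) ℂ),
    0 < n ∧ Function.Surjective ⇑D ∧ ∀ a : A, χ a = (D a).trace

/-- `φ` agrees on the corner algebra `H = eAe = {x | e*x*e = x}` with an irreducible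
character of `H`: there is an irreducible (i.e. surjective) unital matrix representation
of `H` of positive degree whose trace is `φ` on `H`. -/
def IsIrrCharOn {A : Type*} [Ring A] [Algebra ℂ A] (e : A) (φ : A → ℂ) : Prop :=
  ∃ (n : ℕ) (D : A → Matrix (Fin n) (Fin n) ℂ),
    0 < n ∧ D e = 1 ∧
    (∀ x y : A, e * x * e = x → e * y * e = y → D (x + y) = D x + D y) ∧
    (∀ (c : ℂ) (x : A), e * x * e = x → D (c • x) = c • D x) ∧
    (∀ x y : A, e * x * e = x → e * y * e = y → D (x * y) = D x * D y) ∧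
    (∀ M : Matrix (Fin n) (Fin n) ℂ, ∃ x : A, e * x * e = x ∧ D x = M) ∧
    (∀ x : A, e * x * e = x → φ x = (D x).trace)

/-- `C` is a closed subset of the basis `B` : `C` is nonempty and every basis element
occurring with nonzero coefficient in `c* ⬝ d` (for `c, d ∈ C`) lies in `C`.
Here `coord b x` is the coefficient of the basis element `b` in `x`. -/
def IsClosedSubset {A : Type*} [Ring A] [Algebra ℂ A] [StarRing A] [StarModule ℂ A]
    (B C : Finset A) (coord : A → A → ℂ) : Prop :=
  C.Nonempty ∧ C ⊆ B ∧ ∀ c ∈ C, ∀ d ∈ C, ∀ b ∈ B, coord b (star c * d) ≠ 0 → b ∈ C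

open scoped Classical in
/-- The double coset `CbC` : basis elements occurring with nonzero coefficient
in `C⁺ * b * C⁺`. -/
noncomputable def DCoset {A : Type*} [Ring A] [Algebra ℂ A]
    (B : Finset A) (coord : A → A → ℂ) (C : Finset A) (b : A) : Finset A :=
  B.filter fun y => coord y ((∑ c ∈ C, c) * b * (∑ c ∈ C, c)) ≠ 0

/-- The quotient basis element `b/C = |C⁺|⁻¹ (CbC)⁺`. -/
noncomputable def quo {A : Type*} [Ring A] [Algebra ℂ A]
    (B : Finset A) (deg : A →ₐ[ℂ] ℂ) (coord : A → A → ℂ) (C : Finset A) (b : A) : A :=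
  (∑ c ∈ C, deg c)⁻¹ • ∑ x ∈ DCoset B coord C b, x

/-! If `D` affords `ζ` and sends `star` to transpose, then for `b, c ∈ B` the entrywise product
`∑ i j, D b i j * D c i j = trace (D b * (D c)ᵀ) = ζ (b * star c)` is `0` for `b ≠ c` and
`|b| |B⁺|` for `b = c`. For `(0,1)`-matrices this forces disjoint supports, so `∑ b ∈ B, D b`
is a `(0,1)`-matrix whose entries add up to `∑ b, |b| |B⁺| = n²`, i.e. it is `J`; `D` is
faithful because `ζ` is nondegenerate. Conversely, disjointness from `D 1 = 1` kills the diagonal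
of `D b` for `b ≠ 1`, and counting the entries of `J` gives `n = |B⁺|`. -/

open scoped ComplexOrder

theorem sum_eq_zero_or_one_of_mul_eq_zero {ι R : Type*} [Semiring R] {s : Finset ι} {f : ι → R}
    (hf : ∀ i ∈ s, f i = 0 ∨ f i = 1) (hdisj : ∀ i ∈ s, ∀ j ∈ s, i ≠ j → f i * f j = 0) :
    ∑ i ∈ s, f i = 0 ∨ ∑ i ∈ s, f i = 1 := by
  by_cases hone : ∃ i ∈ s, f i = 1
  · obtain ⟨i, hi, hfi⟩ := hone
    refine Or.inr ?_
    rw [Finset.sum_eq_single_of_mem i hi fun j hj hji => ?_, hfi]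
    simpa [hfi] using hdisj i hi j hj hji.symm
  · push Not at hone
    exact Or.inl <| Finset.sum_eq_zero fun i hi => (hf i hi).resolve_right (hone i hi)

theorem eq_zero_of_sum_sum_eq_zero {ι κ M : Type*} [Fintype ι] [Fintype κ] [AddCommMonoid M]
    [PartialOrder M] [IsOrderedAddMonoid M] {f : ι → κ → M} (hf : ∀ i j, 0 ≤ f i j)
    (hsum : ∑ i, ∑ j, f i j = 0) (i : ι) (j : κ) : f i j = 0 := by
  rw [← Fintype.sum_prod_type'] at hsum
  exact congrFun ((Fintype.sum_eq_zero_iff_of_nonneg fun p => hf p.1 p.2).1 hsum) (i, j)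

theorem Matrix.trace_mul_transpose {m n R : Type*} [Fintype m] [Fintype n] [CommSemiring R]
    (M N : Matrix m n R) : (M * Nᵀ).trace = ∑ i, ∑ j, M i j * N i j := by
  simp [Matrix.trace, Matrix.mul_apply]

theorem Matrix.sum_sum_finset_sum_apply {ι m n R : Type*} [Fintype m] [Fintype n]
    [AddCommMonoid R] (s : Finset ι) (M : ι → Matrix m n R) :
    ∑ i : m, ∑ j : n, (∑ b ∈ s, M b) i j = ∑ b ∈ s, ∑ i : m, ∑ j : n, M b i j := by
  simp only [Matrix.sum_apply]
  exact (Finset.sum_congr rfl fun i _ => Finset.sum_comm).trans Finset.sum_comm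

section Representation

variable {A : Type*} [Ring A] [Algebra ℂ A] [StarRing A] {n : ℕ}
  (D : A →ₐ[ℂ] Matrix (Fin n) (Fin n) ℂ)

theorem AlgHom.sum_mul_apply_eq_trace_mul_star {b c : A} (hc : D (star c) = (D c)ᵀ) :
    ∑ i, ∑ j, D b i j * D c i j = (D (b * star c)).trace := by
  rw [map_mul, hc, Matrix.trace_mul_transpose]

theorem AlgHom.sum_apply_eq_trace_mul_star {b : A} (h01 : ∀ i j, D b i j = 0 ∨ D b i j = 1)
    (hb : D (star b) = (D b)ᵀ) : ∑ i, ∑ j, D b i j = (D (b * star b)).trace := by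
  rw [← D.sum_mul_apply_eq_trace_mul_star hb]
  refine Finset.sum_congr rfl fun i _ => Finset.sum_congr rfl fun j _ => ?_
  rcases h01 i j with h | h <;> simp [h]

end Representation

namespace IsCAlgebra

variable {A : Type*} [Ring A] [Algebra ℂ A] [StarRing A] [StarModule ℂ A]
  {B : Finset A} {deg : A →ₐ[ℂ] ℂ} {lam : A → A → A → ℝ}
  (h : IsCAlgebra A B deg lam)
include h

theorem deg_ne_zero {b : A} (hb : b ∈ B) : deg b ≠ 0 := by
  rw [← h.lam_one_eq b hb]
  exact_mod_cast (h.deg_pos b hb).ne'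

theorem sum_deg_ne_zero : ∑ b ∈ B, deg b ≠ 0 := by
  have hsum : ∑ b ∈ B, deg b = ((∑ b ∈ B, lam b (star b) 1 : ℝ) : ℂ) := by
    push_cast
    exact Finset.sum_congr rfl fun b hb => (h.lam_one_eq b hb).symm
  rw [hsum]
  exact_mod_cast (Finset.sum_pos (fun b hb => h.deg_pos b hb) ⟨1, h.one_mem⟩).ne'

section TraceLike

variable {τ : A →ₗ[ℂ] ℂ} (hτ : ∀ b ∈ B, b ≠ 1 → τ b = 0)
include hτ

theorem map_mul_eq_lam_mul {a b : A} (ha : a ∈ B) (hb : b ∈ B) :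
    τ (a * b) = lam a b 1 * τ 1 := by
  rw [h.struct a ha b hb, map_sum, Finset.sum_eq_single_of_mem 1 h.one_mem fun c hc hc1 => ?_,
    map_smul, smul_eq_mul]
  rw [map_smul, hτ c hc hc1, smul_zero]

theorem map_mul_star_self {a : A} (ha : a ∈ B) : τ (a * star a) = deg a * τ 1 := by
  rw [h.map_mul_eq_lam_mul hτ ha (h.star_mem a ha), h.lam_one_eq a ha]

theorem map_mul_star_of_ne {a b : A} (ha : a ∈ B) (hb : b ∈ B) (hab : a ≠ b) :
    τ (a * star b) = 0 := by
  rw [h.map_mul_eq_lam_mul hτ ha (h.star_mem b hb),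
    h.lam_one_ne a ha (star b) (h.star_mem b hb) (by rwa [star_star]), Complex.ofReal_zero,
    zero_mul]

-- `B` is an orthogonal basis for `(x, y) ↦ τ (x * star y)` with `τ (c * star c) ≠ 0`.
theorem eq_zero_of_map_mul_star_eq_zero (hτ1 : τ 1 ≠ 0) {x : A}
    (hx : ∀ c ∈ B, τ (x * star c) = 0) : x = 0 := by
  obtain ⟨f, -, rfl⟩ := Submodule.mem_span_finset.mp (h.span_top ▸ Submodule.mem_top (x := x))
  refine Finset.sum_eq_zero fun c hc => ?_
  have hfc : τ ((∑ b ∈ B, f b • b) * star c) = f c * (deg c * τ 1) := by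
    simp_rw [Finset.sum_mul, smul_mul_assoc, map_sum, map_smul, smul_eq_mul]
    rw [Finset.sum_eq_single_of_mem c hc fun b hb hbc => ?_, h.map_mul_star_self hτ hc]
    rw [h.map_mul_star_of_ne hτ hb hc hbc, mul_zero]
  rw [hx c hc, eq_comm, mul_eq_zero, or_iff_left (mul_ne_zero (h.deg_ne_zero hc) hτ1)] at hfc
  rw [hfc, zero_smul]

end TraceLike

section AffordsStdTrace

variable {ζ : A →ₗ[ℂ] ℂ} (hζ : IsStdTrace B deg ζ)
  {n : ℕ} {D : A →ₐ[ℂ] Matrix (Fin n) (Fin n) ℂ} (hD : ∀ x, (D x).trace = ζ x)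
include hζ hD

theorem injective_of_trace_eq_stdTrace : Function.Injective D := by
  refine (injective_iff_map_eq_zero D).2 fun x hx =>
    h.eq_zero_of_map_mul_star_eq_zero hζ.2 (hζ.1 ▸ h.sum_deg_ne_zero) fun c _ => ?_
  rw [← hD, map_mul, hx, zero_mul, Matrix.trace_zero]

variable (hstar : ∀ b ∈ B, D (star b) = (D b)ᵀ)
  (h01 : ∀ b ∈ B, ∀ i j, D b i j = 0 ∨ D b i j = 1)
include hstar h01

theorem apply_mul_apply_eq_zero_of_trace_eq_stdTrace {b c : A} (hb : b ∈ B) (hc : c ∈ B)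
    (hbc : b ≠ c) (i j : Fin n) : D b i j * D c i j = 0 := by
  have hnonneg : ∀ {x : ℂ}, x = 0 ∨ x = 1 → 0 ≤ x := by rintro x (rfl | rfl) <;> simp
  refine eq_zero_of_sum_sum_eq_zero (fun i j => mul_nonneg (hnonneg (h01 b hb i j))
    (hnonneg (h01 c hc i j))) ?_ i j
  rw [D.sum_mul_apply_eq_trace_mul_star (hstar c hc), hD, h.map_mul_star_of_ne hζ.2 hb hc hbc]

theorem sum_apply_eq_one_of_trace_eq_stdTrace (i j : Fin n) : (∑ b ∈ B, D b) i j = 1 := by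
  have hn : (n : ℂ) = ∑ b ∈ B, deg b := by simpa [hζ.1] using hD 1
  have hE01 : ∀ i j, (∑ b ∈ B, D b) i j = 0 ∨ (∑ b ∈ B, D b) i j = 1 := fun i j => by
    rw [Matrix.sum_apply]
    exact sum_eq_zero_or_one_of_mul_eq_zero (fun b hb => h01 b hb i j) fun b hb c hc hbc =>
      h.apply_mul_apply_eq_zero_of_trace_eq_stdTrace hζ hD hstar h01 hb hc hbc i j
  have hsum : ∑ i, ∑ j, (∑ b ∈ B, D b) i j = n * n := by
    rw [Matrix.sum_sum_finset_sum_apply, hn, Finset.sum_mul]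
    refine Finset.sum_congr rfl fun b hb => ?_
    rw [D.sum_apply_eq_trace_mul_star (h01 b hb) (hstar b hb), hD,
      h.map_mul_star_self hζ.2 hb, hζ.1]
  have hcompl : ∑ i, ∑ j, (1 - (∑ b ∈ B, D b) i j) = 0 := by
    simp [Finset.sum_sub_distrib, hsum]
  have hnonneg : ∀ i j, 0 ≤ 1 - (∑ b ∈ B, D b) i j := fun i j => by
    rcases hE01 i j with h0 | h1 <;> simp [*]
  exact (sub_eq_zero.1 (eq_zero_of_sum_sum_eq_zero hnonneg hcompl i j)).symm

end AffordsStdTrace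

section Adjacency

variable {n : ℕ} {D : A →ₐ[ℂ] Matrix (Fin n) (Fin n) ℂ}
  (h01 : ∀ b ∈ B, ∀ i j, D b i j = 0 ∨ D b i j = 1)
  (hdisj : ∀ b ∈ B, ∀ c ∈ B, b ≠ c → ∀ i j, ¬(D b i j = 1 ∧ D c i j = 1))
include h01 hdisj

theorem apply_diag_eq_zero_of_ne_one {b : A} (hb : b ∈ B) (hb1 : b ≠ 1) (i : Fin n) :
    D b i i = 0 :=
  (h01 b hb i i).resolve_right fun hbii =>
    hdisj b hb 1 h.one_mem hb1 i i ⟨hbii, by simp⟩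

theorem trace_eq_stdTrace_of_adjacency {ζ : A →ₗ[ℂ] ℂ} (hζ : IsStdTrace B deg ζ)
    (hinj : Function.Injective D) (hstar : ∀ b ∈ B, D (star b) = (D b)ᵀ)
    (hJ : ∑ b ∈ B, D b = Matrix.of fun _ _ => (1 : ℂ)) (x : A) : (D x).trace = ζ x := by
  set τ : A →ₗ[ℂ] ℂ := Matrix.traceLinearMap (Fin n) ℂ ℂ ∘ₗ D.toLinearMap
  have hτ : ∀ b ∈ B, b ≠ 1 → τ b = 0 := fun b hb hb1 =>
    Fintype.sum_eq_zero _ fun i => h.apply_diag_eq_zero_of_ne_one h01 hdisj hb hb1 i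
  have hτ1 : τ 1 = n := by simp [τ]
  have hn0 : (n : ℂ) ≠ 0 := by
    rintro hn
    obtain rfl : n = 0 := by exact_mod_cast hn
    simpa using congrArg deg (hinj (Subsingleton.elim (D 1) (D 0)))
  have hn : (n : ℂ) = ∑ b ∈ B, deg b := by
    refine mul_right_cancel₀ hn0 ?_
    calc (n : ℂ) * n = ∑ i, ∑ j, (∑ b ∈ B, D b) i j := by simp [hJ]
      _ = ∑ b ∈ B, τ (b * star b) := by
        rw [Matrix.sum_sum_finset_sum_apply]
        exact Finset.sum_congr rfl fun b hb =>
          D.sum_apply_eq_trace_mul_star (h01 b hb) (hstar b hb)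
      _ = (∑ b ∈ B, deg b) * n := by
        rw [Finset.sum_mul]
        exact Finset.sum_congr rfl fun b hb => by rw [h.map_mul_star_self hτ hb, hτ1]
  have hτζ : τ = ζ := LinearMap.ext_on h.span_top fun b hb => by
    by_cases hb1 : b = 1
    · rw [hb1, hτ1, hn, hζ.1]
    · rw [hτ b hb hb1, hζ.2 b hb hb1]
  exact LinearMap.congr_fun hτζ x

end Adjacency

end IsCAlgebra

theorem stmt18_general {A : Type*} [Ring A] [Algebra ℂ A] [StarRing A] [StarModule ℂ A]
    (B : Finset A) (deg : A →ₐ[ℂ] ℂ) (lam : A → A → A → ℝ)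
    (hTA : IsTableAlgebra A B deg lam)
    (ζ : A →ₗ[ℂ] ℂ) (hζ : IsStdTrace B deg ζ) :
    (∃ (n : ℕ) (D : A →ₐ[ℂ] Matrix (Fin n) (Fin n) ℂ),
      Function.Injective ⇑D ∧
      (∀ b ∈ B, ∀ i j, D b i j = 0 ∨ D b i j = 1) ∧
      (∀ b ∈ B, D (star b) = (D b)ᵀ) ∧
      (∀ b ∈ B, ∀ c ∈ B, b ≠ c → ∀ i j, ¬(D b i j = 1 ∧ D c i j = 1)) ∧
      (∑ b ∈ B, D b) = Matrix.of (fun _ _ => (1 : ℂ)))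
    ↔
    (∃ (n : ℕ) (D : A →ₐ[ℂ] Matrix (Fin n) (Fin n) ℂ),
      (∀ x : A, (D x).trace = ζ x) ∧
      (∀ b ∈ B, D (star b) = (D b)ᵀ) ∧
      (∀ b ∈ B, ∀ i j, D b i j = 0 ∨ D b i j = 1)) := by
  have h := hTA.toIsCAlgebra
  constructor
  · rintro ⟨n, D, hinj, h01, hstar, hdisj, hJ⟩
    exact ⟨n, D, h.trace_eq_stdTrace_of_adjacency h01 hdisj hζ hinj hstar hJ, hstar, h01⟩
  · rintro ⟨n, D, hD, hstar, h01⟩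
    refine ⟨n, D, h.injective_of_trace_eq_stdTrace hζ hD, h01, hstar, ?_, ?_⟩
    · intro b hb c hc hbc i j ⟨hbij, hcij⟩
      simpa [hbij, hcij] using
        h.apply_mul_apply_eq_zero_of_trace_eq_stdTrace hζ hD hstar h01 hb hc hbc i j
    · ext i j
      exact h.sum_apply_eq_one_of_trace_eq_stdTrace hζ hD hstar h01 i j

/-- a commutative table algebra comes from an association scheme (i.e. has
a faithful unital representation by pairwise-disjoint `(0,1)`-matrices, closed under
transpose via `star`, summing to the all-ones matrix `J`) iff it satisfies the standard
character condition and some representation affording `ζ` sends `star` to transpose and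
takes `(0,1)`-matrix values on `B`. -/
theorem stmt18 {A : Type*} [Ring A] [Algebra ℂ A] [StarRing A] [StarModule ℂ A]
    (B : Finset A) (deg : A →ₐ[ℂ] ℂ) (lam : A → A → A → ℝ)
    (hTA : IsTableAlgebra A B deg lam)
    (hcomm : ∀ x y : A, x * y = y * x)
    (ζ : A →ₗ[ℂ] ℂ) (hζ : IsStdTrace B deg ζ) :
    (∃ (n : ℕ) (D : A →ₐ[ℂ] Matrix (Fin n) (Fin n) ℂ),
      Function.Injective ⇑D ∧
      (∀ b ∈ B, ∀ i j, D b i j = 0 ∨ D b i j = 1) ∧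
      (∀ b ∈ B, D (star b) = (D b)ᵀ) ∧
      (∀ b ∈ B, ∀ c ∈ B, b ≠ c → ∀ i j, ¬(D b i j = 1 ∧ D c i j = 1)) ∧
      (∑ b ∈ B, D b) = Matrix.of (fun _ _ => (1 : ℂ)))
    ↔
    (∃ (n : ℕ) (D : A →ₐ[ℂ] Matrix (Fin n) (Fin n) ℂ),
      (∀ x : A, (D x).trace = ζ x) ∧
      (∀ b ∈ B, D (star b) = (D b)ᵀ) ∧
      (∀ b ∈ B, ∀ i j, D b i j = 0 ∨ D b i j = 1)) :=
  stmt18_general B deg lam hTA ζ hζ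
end

section
/- Let (A,B) be a table algebra satisfying the standard character condition and let D : A → Mat_n(ℂ) be a representation affording ζ. Then the matrices D(b), b ∈ B, are (0,1)-matrices satisfying D(b*) = D(b)ᵀ, with no two of them having an entry 1 in the same position and with Σ_{b∈B} D(b) = J (so that the span of {D(b)} is a cellular algebra) if and only if D preserves Hadamard products, i.e., D(b) ∘ D(c) = δ_{bc} D(b) for all b, c ∈ B, where ∘ denotes the entrywise (Hadamard) product of matrices. -/
/-! Hadamard idempotence and orthogonality say exactly that the `D b` are `(0,1)`-matrices
with disjoint supports, so the content is the converse's two remaining conditions. The sum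
`E = D(B⁺)` is then a `(0,1)`-matrix, and since `D` affords `ζ`, `n = ζ 1 = |B⁺|` and
`tr (E²) = ζ ((B⁺)²) = |B⁺|²`. As `tr (E²) = ∑ᵢⱼ Eᵢⱼ Eⱼᵢ` is a sum of `n²` terms in `{0,1}`,
all of them equal `1`, so `E = J`. Likewise `tr (D b * D c) = ζ (b c) = 0` for `c ≠ b*`, so a
`1` at `(i,j)` in `D b` forces `0` at `(j,i)` in every `D c` with `c ≠ b*`; as `E = J`,
`D (b*)` has a `1` there. -/

open Matrix
open scoped BigOperators

section ZeroOneSums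

open Finset

variable {ι R : Type*}

lemma sum_eq_card_filter_eq_one [NonAssocSemiring R] [DecidableEq R] {s : Finset ι}
    {f : ι → R} (hf : ∀ i ∈ s, f i = 0 ∨ f i = 1) : ∑ i ∈ s, f i = #{i ∈ s | f i = 1} := by
  rw [natCast_card_filter]
  refine sum_congr rfl fun i hi => ?_
  by_cases h : f i = 1
  · rw [if_pos h, h]
  · rw [if_neg h]
    exact (hf i hi).resolve_right h

lemma eq_zero_of_sum_eq_zero_of_zero_or_one [NonAssocSemiring R] [CharZero R] {s : Finset ι}
    {f : ι → R} (hf : ∀ i ∈ s, f i = 0 ∨ f i = 1) (hs : ∑ i ∈ s, f i = 0) {i : ι} (hi : i ∈ s) :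
    f i = 0 := by
  classical
  rw [sum_eq_card_filter_eq_one hf, Nat.cast_eq_zero, card_filter_eq_zero_iff] at hs
  exact (hf i hi).resolve_right (hs i hi)

lemma eq_one_of_sum_eq_card_of_zero_or_one [NonAssocSemiring R] [CharZero R] {s : Finset ι}
    {f : ι → R} (hf : ∀ i ∈ s, f i = 0 ∨ f i = 1) (hs : ∑ i ∈ s, f i = #s) {i : ι} (hi : i ∈ s) :
    f i = 1 := by
  classical
  rw [sum_eq_card_filter_eq_one hf, Nat.cast_inj, card_filter_eq_iff] at hs
  exact hs i hi

end ZeroOneSums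

section ZeroOneMatrices

variable {ι m n R : Type*}

def IsZeroOneMatrix [Zero R] [One R] (M : Matrix m n R) : Prop :=
  ∀ i j, M i j = 0 ∨ M i j = 1

lemma hadamard_self_eq_self_iff [Ring R] [NoZeroDivisors R] {M : Matrix m n R} :
    M ⊙ M = M ↔ IsZeroOneMatrix M := by
  simp only [← Matrix.ext_iff, hadamard_apply, IsZeroOneMatrix,
    ← IsIdempotentElem.iff_eq_zero_or_one]
  rfl

lemma hadamard_eq_zero_iff [MulZeroOneClass R] [NeZero (1 : R)] {M N : Matrix m n R}
    (hM : IsZeroOneMatrix M) (hN : IsZeroOneMatrix N) :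
    M ⊙ N = 0 ↔ ∀ i j, ¬(M i j = 1 ∧ N i j = 1) := by
  simp only [← Matrix.ext_iff, hadamard_apply, Matrix.zero_apply]
  refine forall₂_congr fun i j => ?_
  rcases hM i j with h | h <;> rcases hN i j with h' | h' <;> simp [h, h']

lemma trace_mul_eq_sum_mul_apply [Fintype m] [NonUnitalNonAssocSemiring R] (M N : Matrix m m R) :
    (M * N).trace = ∑ p : m × m, M p.1 p.2 * N p.2 p.1 := by
  simp only [trace, diag, mul_apply, Fintype.sum_prod_type]

lemma IsZeroOneMatrix.mul_apply_zero_or_one [MulZeroOneClass R] {M N : Matrix m m R}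
    (hM : IsZeroOneMatrix M) (hN : IsZeroOneMatrix N) (i j : m) :
    M i j * N j i = 0 ∨ M i j * N j i = 1 := by
  rcases hM i j with h | h <;> rcases hN j i with h' | h' <;> simp [h, h']

lemma IsZeroOneMatrix.mul_apply_eq_zero_of_trace_mul_eq_zero [Fintype m] [Semiring R]
    [CharZero R] {M N : Matrix m m R} (hM : IsZeroOneMatrix M) (hN : IsZeroOneMatrix N)
    (htr : (M * N).trace = 0) (i j : m) : M i j * N j i = 0 := by
  rw [trace_mul_eq_sum_mul_apply] at htr
  exact eq_zero_of_sum_eq_zero_of_zero_or_one (fun p _ => hM.mul_apply_zero_or_one hN p.1 p.2)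
    htr (Finset.mem_univ (i, j))

lemma IsZeroOneMatrix.eq_of_trace_mul_self_eq_card_sq [Fintype m] [Semiring R] [CharZero R]
    {E : Matrix m m R} (hE : IsZeroOneMatrix E)
    (htr : (E * E).trace = (Fintype.card m : R) ^ 2) : E = of fun _ _ => 1 := by
  rw [trace_mul_eq_sum_mul_apply, sq, ← Nat.cast_mul, ← Fintype.card_prod,
    ← Finset.card_univ] at htr
  ext i j
  have hij := eq_one_of_sum_eq_card_of_zero_or_one
    (fun p _ => hE.mul_apply_zero_or_one hE p.1 p.2) htr (Finset.mem_univ (i, j))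
  rcases hE i j with h | h
  · simp [h] at hij
  · exact h

lemma isZeroOneMatrix_sum [Semiring R] {s : Finset ι} {M : ι → Matrix m n R}
    (h01 : ∀ b ∈ s, IsZeroOneMatrix (M b))
    (hdisj : ∀ b ∈ s, ∀ c ∈ s, b ≠ c → ∀ i j, ¬(M b i j = 1 ∧ M c i j = 1)) :
    IsZeroOneMatrix (∑ b ∈ s, M b) := by
  classical
  intro i j
  rw [Matrix.sum_apply, sum_eq_card_filter_eq_one fun b hb => h01 b hb i j]
  have hcard : (s.filter fun b => M b i j = 1).card ≤ 1 := by
    refine Finset.card_le_one.2 fun b hb c hc => ?_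
    simp only [Finset.mem_filter] at hb hc
    by_contra hbc
    exact hdisj b hb.1 c hc.1 hbc i j ⟨hb.2, hc.2⟩
  interval_cases (s.filter fun b => M b i j = 1).card <;> simp

lemma apply_eq_one_of_trace_mul_eq_zero [Fintype m] [Semiring R] [CharZero R] {s : Finset ι}
    {M : ι → Matrix m m R} (h01 : ∀ c ∈ s, IsZeroOneMatrix (M c))
    (hsum : ∑ c ∈ s, M c = of fun _ _ => 1) {b b' : ι} (hb : b ∈ s) (hb' : b' ∈ s)
    (htr : ∀ c ∈ s, c ≠ b' → (M b * M c).trace = 0) {i j : m} (hij : M b i j = 1) :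
    M b' j i = 1 := by
  have hoff : ∀ c ∈ s, c ≠ b' → M c j i = 0 := fun c hc hcb' => by
    simpa [hij] using (h01 b hb).mul_apply_eq_zero_of_trace_mul_eq_zero (h01 c hc)
      (htr c hc hcb') i j
  have hji := congrFun₂ hsum j i
  rwa [Matrix.sum_apply, Finset.sum_eq_single_of_mem b' hb' hoff] at hji

lemma eq_transpose_of_trace_mul_eq_zero [Fintype m] [Semiring R] [CharZero R] {s : Finset ι}
    {M : ι → Matrix m m R} (h01 : ∀ c ∈ s, IsZeroOneMatrix (M c))
    (hsum : ∑ c ∈ s, M c = of fun _ _ => 1) {b b' : ι} (hb : b ∈ s) (hb' : b' ∈ s)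
    (htr : ∀ c ∈ s, c ≠ b' → (M b * M c).trace = 0)
    (htr' : ∀ c ∈ s, c ≠ b → (M b' * M c).trace = 0) : M b' = (M b)ᵀ := by
  ext j i
  rw [transpose_apply]
  rcases h01 b hb i j with hij | hij
  · rcases h01 b' hb' j i with hji | hji
    · rw [hij, hji]
    · have := apply_eq_one_of_trace_mul_eq_zero h01 hsum hb' hb htr' hji
      exact absurd (this.symm.trans hij) one_ne_zero
  · rw [hij]
    exact apply_eq_one_of_trace_mul_eq_zero h01 hsum hb hb' htr hij

end ZeroOneMatrices

namespace IsCAlgebra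

variable {A : Type*} [Ring A] [Algebra ℂ A] [StarRing A] [StarModule ℂ A]
  {B : Finset A} {deg : A →ₐ[ℂ] ℂ} {lam : A → A → A → ℝ} {ζ : A →ₗ[ℂ] ℂ}

lemma stdTrace_mul (hC : IsCAlgebra A B deg lam) (hζ : IsStdTrace B deg ζ) {a b : A}
    (ha : a ∈ B) (hb : b ∈ B) : ζ (a * b) = lam a b 1 * ∑ c ∈ B, deg c := by
  rw [hC.struct a ha b hb, map_sum, Finset.sum_eq_single_of_mem 1 hC.one_mem
    fun c hc hc1 => by rw [map_smul, hζ.2 c hc hc1, smul_zero], map_smul, hζ.1, smul_eq_mul]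

lemma stdTrace_mul_eq_zero (hC : IsCAlgebra A B deg lam) (hζ : IsStdTrace B deg ζ) {a b : A}
    (ha : a ∈ B) (hb : b ∈ B) (hab : b ≠ star a) : ζ (a * b) = 0 := by
  rw [hC.stdTrace_mul hζ ha hb, hC.lam_one_ne a ha b hb fun h => hab (by rw [h, star_star]),
    Complex.ofReal_zero, zero_mul]

lemma stdTrace_mul_star (hC : IsCAlgebra A B deg lam) (hζ : IsStdTrace B deg ζ) {a : A}
    (ha : a ∈ B) : ζ (a * star a) = deg a * ∑ c ∈ B, deg c := by
  rw [hC.stdTrace_mul hζ ha (hC.star_mem a ha), hC.lam_one_eq a ha]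

lemma stdTrace_sum_mul_sum (hC : IsCAlgebra A B deg lam) (hζ : IsStdTrace B deg ζ) :
    ζ ((∑ b ∈ B, b) * ∑ b ∈ B, b) = (∑ b ∈ B, deg b) ^ 2 := by
  calc ζ ((∑ b ∈ B, b) * ∑ b ∈ B, b) = ∑ a ∈ B, ∑ b ∈ B, ζ (a * b) := by
        simp only [Finset.sum_mul_sum, map_sum]
    _ = ∑ a ∈ B, deg a * ∑ c ∈ B, deg c := by
        refine Finset.sum_congr rfl fun a ha => ?_
        rw [Finset.sum_eq_single_of_mem (star a) (hC.star_mem a ha)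
          fun b hb hba => hC.stdTrace_mul_eq_zero hζ ha hb hba, hC.stdTrace_mul_star hζ ha]
    _ = (∑ b ∈ B, deg b) ^ 2 := by rw [← Finset.sum_mul, sq]

end IsCAlgebra

/-- for a representation `D` affording the standard character `ζ` of a
table algebra, the matrices `D(b)` are `(0,1)`, transpose-compatible with `star`,
pairwise disjoint and sum to `J` (so that the span of `{D(b)}` is a cellular algebra)
iff `D` preserves Hadamard products, i.e. `D(b) ∘ D(c) = δ_{bc} D(b)`. -/
theorem stmt19 {A : Type*} [Ring A] [Algebra ℂ A] [StarRing A] [StarModule ℂ A]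
    (B : Finset A) (deg : A →ₐ[ℂ] ℂ) (lam : A → A → A → ℝ)
    (hTA : IsTableAlgebra A B deg lam)
    (ζ : A →ₗ[ℂ] ℂ) (hζ : IsStdTrace B deg ζ)
    (n : ℕ) (D : A →ₐ[ℂ] Matrix (Fin n) (Fin n) ℂ)
    (hD : ∀ x : A, (D x).trace = ζ x) :
    ((∀ b ∈ B, ∀ i j, D b i j = 0 ∨ D b i j = 1) ∧
     (∀ b ∈ B, D (star b) = (D b)ᵀ) ∧
     (∀ b ∈ B, ∀ c ∈ B, b ≠ c → ∀ i j, ¬(D b i j = 1 ∧ D c i j = 1)) ∧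
     (∑ b ∈ B, D b) = Matrix.of (fun _ _ => (1 : ℂ)))
    ↔
    ((∀ b ∈ B, Matrix.hadamard (D b) (D b) = D b) ∧
     (∀ b ∈ B, ∀ c ∈ B, b ≠ c → Matrix.hadamard (D b) (D c) = 0)) := by
  have hC := hTA.toIsCAlgebra
  constructor
  · rintro ⟨h01, -, hdisj, -⟩
    exact ⟨fun b hb => hadamard_self_eq_self_iff.2 (h01 b hb),
      fun b hb c hc hbc => (hadamard_eq_zero_iff (h01 b hb) (h01 c hc)).2 (hdisj b hb c hc hbc)⟩
  rintro ⟨hidem, horth⟩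
  have h01 (b) (hb : b ∈ B) : IsZeroOneMatrix (D b) := hadamard_self_eq_self_iff.1 (hidem b hb)
  have hdisj (b) (hb : b ∈ B) (c) (hc : c ∈ B) (hbc : b ≠ c) :=
    (hadamard_eq_zero_iff (h01 b hb) (h01 c hc)).1 (horth b hb c hc hbc)
  have hdim : (Fintype.card (Fin n) : ℂ) = ∑ b ∈ B, deg b := by
    rw [← Matrix.trace_one, ← map_one D, hD, hζ.1]
  have hJ : ∑ b ∈ B, D b = Matrix.of fun _ _ => 1 := by
    refine (isZeroOneMatrix_sum h01 hdisj).eq_of_trace_mul_self_eq_card_sq ?_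
    rw [← map_sum, ← map_mul, hD, hC.stdTrace_sum_mul_sum hζ, hdim]
  have htr {b} (hb : b ∈ B) {c} (hc : c ∈ B) (hcb : c ≠ star b) : (D b * D c).trace = 0 := by
    rw [← map_mul, hD, hC.stdTrace_mul_eq_zero hζ hb hc hcb]
  refine ⟨h01, fun b hb => ?_, hdisj, hJ⟩
  have hb' := hC.star_mem b hb
  exact eq_transpose_of_trace_mul_eq_zero h01 hJ hb hb' (fun c => htr hb)
    fun c hc hcb => htr hb' hc (by rwa [star_star])
end
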